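/- arXiv:math/0004139 — 2 statements merged into one kernel-verified Lean document; each statement's English description precedes it below -/
import Mathlib

section
/- Let A be a unital ring and N ⊆ A a subring containing the unit. Call a left A-module P projective relative to N if for every cochain complex C^• of left A-modules that is homotopy equivalent to the zero complex as a complex of left N-modules, the complex with degree-n component Hom_A(P, C^n) (and differential f ↦ d_C ∘ f) is acyclic. Then every cochain complex S^• of left A-modules that is bounded from above (S^n = 0 for all n greater than some integer n₁) and all of whose terms S^n are projective relative to N is K-projective relative to N: for every cochain complex C^• of left A-modules that is homotopy equivalent to the zero complex as a complex of left N-modules, the hom-complex hom_A^•(S^•, C^•) is acyclic. -/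
open CategoryTheory

/-- The hom-complex `hom_R^•(K, L)` (degree-`n` component `∏_p Hom_R(K^p, L^{p+n})`,
differential `d f = d_L ∘ f − (−1)^n f ∘ d_K`) is acyclic. -/
def HomComplexAcyclic {R : Type} [Ring R] (K L : CochainComplex (ModuleCat R) ℤ) : Prop :=
  ∀ (n : ℤ) (z : CochainComplex.HomComplex.Cochain K L n),
    CochainComplex.HomComplex.δ n (n + 1) z = 0 →
      ∃ w : CochainComplex.HomComplex.Cochain K L (n - 1),
        CochainComplex.HomComplex.δ (n - 1) n w = z

variable (A : Type) [Ring A] (N : Subring A)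

/-- A complex of left `A`-modules is homotopy equivalent to the zero complex as a complex of
left `N`-modules: its identity map is null-homotopic through `N`-linear homotopies. -/
def NullHomotopicOverSubring (C : CochainComplex (ModuleCat A) ℤ) : Prop :=
  Nonempty (Homotopy
    (𝟙 (((ModuleCat.restrictScalars N.subtype).mapHomologicalComplex
      (ComplexShape.up ℤ)).obj C)) 0)

/-- A left `A`-module `P` is projective relative to `N` if for every cochain complex `C` of
left `A`-modules that is homotopy equivalent to zero as a complex of left `N`-modules, the
complex with degree-`n` component `Hom_A(P, C^n)` and differential `f ↦ d_C ∘ f` is acyclic. -/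
def RelativelyProjective (P : ModuleCat A) : Prop :=
  ∀ C : CochainComplex (ModuleCat A) ℤ, NullHomotopicOverSubring A N C →
    ∀ (n : ℤ) (f : P ⟶ C.X n), f ≫ C.d n (n + 1) = 0 →
      ∃ g : P ⟶ C.X (n - 1), g ≫ C.d (n - 1) n = f

/-!
A degree-`n` cocycle `z` of `hom_A^•(S, C)` is written as `δ w` by constructing `w` one degree at
a time, going down from the degree above which `S` vanishes. If `δ w` agrees with `z` in degrees
`> p`, then `z - δ w` is a cocycle vanishing in degree `p + 1`, so its degree-`p` component is a
cocycle of `Hom_A(S^p, C^•)`. That complex is acyclic by relative projectivity of `S^p`, and a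
primitive of this component corrects `w` in degree `p` only. The corrections never touch the
degrees already treated, so the successive cochains stabilise degreewise to a primitive of `z`.
-/

namespace CochainComplex.HomComplex

variable {C : Type*} [Category C] [Preadditive C] {K L : CochainComplex C ℤ}

namespace Cochain

/-- The downward counterpart of `Cochain.EqUpTo`. -/
def EqDownTo {n : ℤ} (α β : Cochain K L n) (p₀ : ℤ) : Prop :=
  ∀ (p q : ℤ) (hpq : p + n = q), p₀ ≤ p → α.v p q hpq = β.v p q hpq

lemma EqDownTo.mono {n : ℤ} {α β : Cochain K L n} {p₀ p₁ : ℤ} (h : α.EqDownTo β p₀)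
    (hp : p₀ ≤ p₁) : α.EqDownTo β p₁ :=
  fun p q hpq hp₁ => h p q hpq (hp.trans hp₁)

lemma EqDownTo.δ {n : ℤ} {α β : Cochain K L n} {p₀ : ℤ} (h : α.EqDownTo β p₀) (m : ℤ) :
    (HomComplex.δ n m α).EqDownTo (HomComplex.δ n m β) p₀ := by
  by_cases hnm : n + 1 = m
  · intro p q hpq hp
    rw [δ_v n m hnm α p q hpq _ _ rfl rfl, δ_v n m hnm β p q hpq _ _ rfl rfl,
      h _ _ _ hp, h _ _ _ (by lia)]
  · simp only [δ_shape _ _ hnm]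
    intro _ _ _ _
    rfl

namespace InductionDown

open InductionUp (sequence)

variable {d : ℤ} {X : ℕ → Set (Cochain K L d)} (φ : ∀ (n : ℕ), X n → X (n + 1)) (x₀ : X 0)

lemma sequence_eqDownTo {p₀ : ℤ}
    (hφ : ∀ (n : ℕ) (x : X n), (φ n x).val.EqDownTo x.val (p₀ - n)) (n₁ n₂ : ℕ) (h : n₁ ≤ n₂) :
    (sequence φ x₀ n₁).val.EqDownTo (sequence φ x₀ n₂).val (p₀ - n₁) := by
  obtain ⟨k, rfl⟩ := Nat.exists_eq_add_of_le h
  induction k with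
  | zero => exact fun _ _ _ _ => rfl
  | succ k hk =>
    intro p q hpq hp
    rw [hk (by lia) p q hpq hp, ← hφ (n₁ + k) (sequence φ x₀ (n₁ + k)) p q hpq (by lia)]
    rfl

def limitSequence (p₀ : ℤ) : Cochain K L d :=
  Cochain.mk (fun p q hpq => (sequence φ x₀ (p₀ - p).toNat).1.v p q hpq)

lemma limitSequence_eqDownTo {p₀ : ℤ}
    (hφ : ∀ (n : ℕ) (x : X n), (φ n x).val.EqDownTo x.val (p₀ - n)) (n : ℕ) :
    (limitSequence φ x₀ p₀).EqDownTo (sequence φ x₀ n).1 (p₀ - n) :=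
  fun p q hpq hp => sequence_eqDownTo φ x₀ hφ _ _ (by lia) p q hpq (by lia)

end InductionDown

lemma v_comp_d_eq_zero_of_δ_eq_zero {n : ℤ} (y : Cochain K L n) (hy : δ n (n + 1) y = 0)
    (p q : ℤ) (hpq : p + n = q) (hy' : y.v (p + 1) (q + 1) (by lia) = 0) :
    y.v p q hpq ≫ L.d q (q + 1) = 0 := by
  have h := congr_v hy p (q + 1) (by lia)
  rwa [δ_v n (n + 1) rfl y p (q + 1) _ q (p + 1) (by lia) rfl, hy', Limits.comp_zero,
    smul_zero, add_zero] at h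

lemma exists_eqDownTo_δ_eqDownTo {m n : ℤ} (hmn : m + 1 = n) (z : Cochain K L n)
    (hz : δ n (n + 1) z = 0) (w : Cochain K L m) (p : ℤ) (hw : (δ m n w).EqDownTo z (p + 1))
    (hL : ∀ f : K.X p ⟶ L.X (p + n), f ≫ L.d (p + n) (p + n + 1) = 0 →
      ∃ g : K.X p ⟶ L.X (p + n - 1), g ≫ L.d (p + n - 1) (p + n) = f) :
    ∃ w' : Cochain K L m, w'.EqDownTo w (p + 1) ∧ (δ m n w').EqDownTo z p := by
  set y := z - δ m n w
  have hy : δ n (n + 1) y = 0 := by simp [y, hz, δ_δ]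
  obtain ⟨g, hg⟩ := hL (y.v p (p + n) rfl)
    (v_comp_d_eq_zero_of_δ_eq_zero y hy p _ rfl (by simp [y, hw (p + 1) _ _ le_rfl]))
  have hw' : (w + single g m).EqDownTo w (p + 1) := fun p' q' hpq' hp' => by
    simp [single_v_eq_zero _ _ _ _ _ (by lia : p' ≠ p)]
  refine ⟨w + single g m, hw', fun p' q' hpq' hp' => ?_⟩
  rcases hp'.eq_or_lt with rfl | hp'
  · obtain rfl : q' = p + n := hpq'.symm
    rw [δ_add, add_v, δ_v m n hmn (single g m) p (p + n) rfl (p + n - 1) (p + 1) rfl rfl,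
      single_v, single_v_eq_zero _ _ _ _ _ (by lia), Limits.comp_zero, smul_zero, add_zero, hg]
    simp [y]
  · exact (hw'.δ n p' q' hpq' (by lia)).trans (hw p' q' hpq' (by lia))

open InductionDown InductionUp in
theorem exists_δ_eq_of_isStrictlyLE (n₁ : ℤ) [K.IsStrictlyLE n₁]
    (hL : ∀ (p q : ℤ) (f : K.X p ⟶ L.X q), f ≫ L.d q (q + 1) = 0 →
      ∃ g : K.X p ⟶ L.X (q - 1), g ≫ L.d (q - 1) q = f)
    {m n : ℤ} (hmn : m + 1 = n) (z : Cochain K L n) (hz : δ n (n + 1) z = 0) :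
    ∃ w : Cochain K L m, δ m n w = z := by
  let X (k : ℕ) : Set (Cochain K L m) := {w | (δ m n w).EqDownTo z (n₁ + 1 - k)}
  let x₀ : X 0 := ⟨0, fun p q hpq hp =>
    (K.isZero_of_isStrictlyLE n₁ p (by lia)).eq_of_src _ _⟩
  have step (k : ℕ) (w : X k) := exists_eqDownTo_δ_eqDownTo hmn z hz w.1 (n₁ - k)
    (w.2.mono (by lia)) (hL _ _)
  let φ (k : ℕ) (w : X k) : X (k + 1) :=
    ⟨(step k w).choose, (step k w).choose_spec.2.mono (by lia)⟩
  have hφ (k : ℕ) (w : X k) : (φ k w).1.EqDownTo w.1 (n₁ + 1 - k) :=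
    (step k w).choose_spec.1.mono (by lia)
  refine ⟨limitSequence φ x₀ (n₁ + 1), ?_⟩
  ext p q hpq
  let k := (n₁ + 1 - p).toNat
  rw [(limitSequence_eqDownTo φ x₀ hφ k).δ n p q hpq (by lia),
    (sequence φ x₀ k).2 p q hpq (by lia)]

end Cochain

end CochainComplex.HomComplex

/-- A bounded-above cochain complex of left `A`-modules, all of whose terms are projective
relative to `N`, is K-projective relative to `N`: for every cochain complex `C` of left
`A`-modules that is homotopy equivalent to zero as a complex of left `N`-modules, the
hom-complex `hom_A^•(S, C)` is acyclic. -/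
theorem bounded_above_complex_of_relative_projectives_is_relatively_K_projective
    (S : CochainComplex (ModuleCat A) ℤ)
    (n₁ : ℤ) (hbdd : ∀ n : ℤ, n₁ < n → Subsingleton (S.X n))
    (hproj : ∀ n : ℤ, RelativelyProjective A N (S.X n)) :
    ∀ C : CochainComplex (ModuleCat A) ℤ, NullHomotopicOverSubring A N C →
      HomComplexAcyclic S C := by
  intro C hC n z hz
  have : S.IsStrictlyLE n₁ := (S.isStrictlyLE_iff n₁).2 fun p hp =>
    have := hbdd p hp
    ModuleCat.isZero_of_subsingleton _
  exact CochainComplex.HomComplex.Cochain.exists_δ_eq_of_isStrictlyLE n₁ (fun p => hproj p C hC)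
    (sub_add_cancel n 1) z hz
end

section
/- Let R be a unital ring. For each (p,q) ∈ ℤ² let X^{p,q} be an R-module, and let d₁ : X^{p,q} → X^{p+1,q} and d₂ : X^{p,q} → X^{p,q+1} be R-linear maps with d₁ ∘ d₁ = 0. Form X^n := ∏_{p∈ℤ} X^{−p, p+n} with the map d := d₁ + d₂ (defined componentwise), and assume d ∘ d = 0, so that (X^•, d) is a cochain complex of R-modules. Suppose that (a) for every q ∈ ℤ the complex (X^{•,q}, d₁) is acyclic (exact at every spot); and (b) X^{p,q} = 0 whenever q < 0, i.e. all nonzero components lie in the upper half of the (p,q)-plane. Then the complex X^• is acyclic: H^n(X^•) = 0 for all n ∈ ℤ. -/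
section AlmostDoubleComplex

variable (R : Type) [Ring R]
variable (X : ℤ → ℤ → Type) [∀ p q, AddCommGroup (X p q)] [∀ p q, Module R (X p q)]

/-- Transport along an equality of the first index. -/
def cast₁ {p p' q : ℤ} (h : p = p') : X p q →ₗ[R] X p' q := by subst h; exact LinearMap.id

/-- Transport along an equality of the second index. -/
def cast₂ {p q q' : ℤ} (h : q = q') : X p q →ₗ[R] X p q' := by subst h; exact LinearMap.id

/-- The degree-`n` component of the product-totalization of the grid `X`:
`X^n = ∏_{p+q=n} X^{p,q}` (equivalently `∏_{p} X^{-p,p+n}`), here recorded as the product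
over the first index `p` of the modules `X^{p,n-p}`. -/
def Tot (n : ℤ) : Type := ∀ p : ℤ, X p (n - p)

instance (n : ℤ) : AddCommGroup (Tot X n) :=
  inferInstanceAs (AddCommGroup (∀ p : ℤ, X p (n - p)))

variable (d₁ : ∀ p q : ℤ, X p q →ₗ[R] X (p + 1) q)
variable (d₂ : ∀ p q : ℤ, X p q →ₗ[R] X p (q + 1))

/-- The total differential `d = d₁ + d₂` on the product-totalization, defined componentwise. -/
def totD (n : ℤ) (x : Tot X n) : Tot X (n + 1) := fun p =>
  (cast₂ R X (by omega : n - (p - 1) = n + 1 - p)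
      ((cast₁ R X (by omega : (p - 1) + 1 = p)) (d₁ (p - 1) (n - (p - 1)) (x (p - 1)))))
    + cast₂ R X (by omega : (n - p) + 1 = n + 1 - p) (d₂ p (n - p) (x p))

end AlmostDoubleComplex

/-!
A cocycle `x` of degree `n + 1` has `x_p ∈ X^{p, n+1-p}`, which vanishes for `p > n + 1`.
A primitive `y` is built column by column leftwards, starting there: `y_{p-1}` is a
`d₁`-preimage of `x_p - d₂ y_p`, which exists by exactness of the rows because
`x_p - d₂ y_p` is a `d₁`-cycle; this follows from `d₂ d₂ = 0` and `d₁ d₂ + d₂ d₁ = 0`,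
both read off from `d ∘ d = 0` on elements with a single nonzero component. The product
totalization accommodates the infinitely many columns.
-/

section Staircase

variable {R : Type} [Ring R] {X : ℤ → ℤ → Type} [∀ p q, AddCommGroup (X p q)]
  [∀ p q, Module R (X p q)]

variable (d₁ : ∀ p q : ℤ, X p q →ₗ[R] X (p + 1) q) (d₂ : ∀ p q : ℤ, X p q →ₗ[R] X p (q + 1))

def totD₁ (n p : ℤ) : X (p - 1) (n - (p - 1)) →ₗ[R] X p (n + 1 - p) :=
  cast₂ R X (by omega) ∘ₗ cast₁ R X (by omega) ∘ₗ d₁ (p - 1) (n - (p - 1))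

def totD₂ (n p : ℤ) : X p (n - p) →ₗ[R] X p (n + 1 - p) :=
  cast₂ R X (by omega) ∘ₗ d₂ p (n - p)

lemma totD_apply (n : ℤ) (x : Tot X n) (p : ℤ) :
    totD R X d₁ d₂ n x p = totD₁ d₁ n p (x (p - 1)) + totD₂ d₂ n p (x p) :=
  rfl

lemma totD_totD_apply (n : ℤ) (x : Tot X n) (p : ℤ) :
    totD R X d₁ d₂ (n + 1) (totD R X d₁ d₂ n x) p =
      totD₁ d₁ (n + 1) p (totD₁ d₁ n (p - 1) (x (p - 1 - 1))) +
        (totD₁ d₁ (n + 1) p (totD₂ d₂ n (p - 1) (x (p - 1))) +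
          totD₂ d₂ (n + 1) p (totD₁ d₁ n p (x (p - 1)))) +
        totD₂ d₂ (n + 1) p (totD₂ d₂ n p (x p)) := by
  simp only [totD_apply, map_add]
  abel

variable {d₁ d₂}

section SquareZero

variable (hdd : ∀ (n : ℤ) (x : Tot X n), totD R X d₁ d₂ (n + 1) (totD R X d₁ d₂ n x) = 0)
include hdd

lemma totD₂_totD₂ (n p : ℤ) (v : X p (n - p)) :
    totD₂ d₂ (n + 1) p (totD₂ d₂ n p v) = 0 := by
  have h := (totD_totD_apply d₁ d₂ n (Pi.single p v) p).symm.trans (congrFun (hdd n _) p)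
  rw [Pi.single_eq_of_ne (by omega : p - 1 - 1 ≠ p),
    Pi.single_eq_of_ne (by omega : p - 1 ≠ p), Pi.single_eq_same] at h
  simp only [map_zero, zero_add, add_zero] at h
  exact h

lemma totD₁_totD₂_add_totD₂_totD₁ (n p : ℤ) (v : X (p - 1) (n - (p - 1))) :
    totD₁ d₁ (n + 1) p (totD₂ d₂ n (p - 1) v) + totD₂ d₂ (n + 1) p (totD₁ d₁ n p v) = 0 := by
  have h := (totD_totD_apply d₁ d₂ n (Pi.single (p - 1) v) p).symm.trans
    (congrFun (hdd n _) p)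
  rw [Pi.single_eq_of_ne (by omega : p - 1 - 1 ≠ p - 1),
    Pi.single_eq_of_ne (by omega : p ≠ p - 1), Pi.single_eq_same] at h
  simp only [map_zero, zero_add, add_zero] at h
  exact h

end SquareZero

lemma exists_totD₁_eq
    (hexact : ∀ (p q : ℤ) (v : X (p + 1) q), d₁ (p + 1) q v = 0 → ∃ w : X p q, d₁ p q w = v)
    (n p : ℤ) (z : X (p - 1) (n + 1 - (p - 1))) (hz : totD₁ d₁ (n + 1) p z = 0) :
    ∃ w, totD₁ d₁ n (p - 1) w = z := by
  -- with free indices the transports can be eliminated by `subst`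
  suffices key : ∀ {a b c e c' e' : ℤ} (ha : a + 1 = c) (hb : b = e) (hc : c + 1 = c')
      (he : e = e') (z : X c e), cast₂ R X he (cast₁ R X hc (d₁ c e z)) = 0 →
      ∃ w : X a b, cast₂ R X hb (cast₁ R X ha (d₁ a b w)) = z from
    key _ _ _ _ z hz
  intro a b c e c' e' ha hb hc he z hz
  subst ha hb hc he
  exact hexact a b z hz

variable (d₁ d₂)

/-- `invFun` picks a genuine preimage as soon as one exists (`totD_staircase_sub_one`); the
values in columns `≥ n + 1` are irrelevant, those modules being zero. -/
noncomputable def staircase (n : ℤ) (x : Tot X (n + 1)) : Tot X n := fun p =>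
  Int.inductionOn' (motive := fun p => X p (n - p)) p (n + 1) 0 (fun _ _ _ => 0)
    fun k _ yk => Function.invFun (totD₁ d₁ n k) (x k - totD₂ d₂ n k yk)

lemma staircase_sub_one (n : ℤ) (x : Tot X (n + 1)) {p : ℤ} (hp : p ≤ n + 1) :
    staircase d₁ d₂ n x (p - 1) =
      Function.invFun (totD₁ d₁ n p) (x p - totD₂ d₂ n p (staircase d₁ d₂ n x p)) :=
  Int.inductionOn'_sub_one hp

variable {d₁ d₂}

lemma totD_staircase_sub_one
    (hdd : ∀ (n : ℤ) (x : Tot X n), totD R X d₁ d₂ (n + 1) (totD R X d₁ d₂ n x) = 0)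
    (hexact : ∀ (p q : ℤ) (v : X (p + 1) q), d₁ (p + 1) q v = 0 → ∃ w : X p q, d₁ p q w = v)
    {n : ℤ} {x : Tot X (n + 1)} (hx : totD R X d₁ d₂ (n + 1) x = 0) {p : ℤ} (hp : p ≤ n + 2)
    (ih : totD R X d₁ d₂ n (staircase d₁ d₂ n x) p = x p) :
    totD R X d₁ d₂ n (staircase d₁ d₂ n x) (p - 1) = x (p - 1) := by
  rw [totD_apply, staircase_sub_one d₁ d₂ n x (by omega : p - 1 ≤ n + 1)]
  set y := staircase d₁ d₂ n x
  set z := x (p - 1) - totD₂ d₂ n (p - 1) (y (p - 1))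
  have hy : totD₁ d₁ n p (y (p - 1)) = x p - totD₂ d₂ n p (y p) :=
    eq_sub_of_add_eq (by rw [← totD_apply, ih])
  have hz : totD₁ d₁ (n + 1) p z = 0 := calc
    totD₁ d₁ (n + 1) p z
        = totD₁ d₁ (n + 1) p (x (p - 1)) + totD₂ d₂ (n + 1) p (totD₁ d₁ n p (y (p - 1))) := by
      rw [map_sub, eq_neg_of_add_eq_zero_left (totD₁_totD₂_add_totD₂_totD₁ hdd n p (y (p - 1))),
        sub_neg_eq_add]
    _ = totD R X d₁ d₂ (n + 1) x p := by
      rw [hy, map_sub, totD₂_totD₂ hdd, sub_zero, totD_apply]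
    _ = 0 := congrFun hx p
  rw [Function.invFun_eq (exists_totD₁_eq hexact n p z hz), sub_add_cancel]

theorem totD_staircase
    (hdd : ∀ (n : ℤ) (x : Tot X n), totD R X d₁ d₂ (n + 1) (totD R X d₁ d₂ n x) = 0)
    (hexact : ∀ (p q : ℤ) (v : X (p + 1) q), d₁ (p + 1) q v = 0 → ∃ w : X p q, d₁ p q w = v)
    (hvanish : ∀ p q : ℤ, q < 0 → Subsingleton (X p q))
    {n : ℤ} {x : Tot X (n + 1)} (hx : totD R X d₁ d₂ (n + 1) x = 0) :
    totD R X d₁ d₂ n (staircase d₁ d₂ n x) = x := by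
  have high : ∀ p, n + 1 < p → totD R X d₁ d₂ n (staircase d₁ d₂ n x) p = x p :=
    fun p hp => (hvanish p (n + 1 - p) (by omega)).elim _ _
  funext p
  by_cases hp : n + 1 < p
  · exact high p hp
  exact Int.leInductionDown (motive := fun p _ => totD R X d₁ d₂ n _ p = x p)
    (high _ (by omega)) (fun p hp ih => totD_staircase_sub_one hdd hexact hx hp ih) p (by omega)

end Staircase

theorem almost_double_complex_acyclic_of_rows_acyclic_of_upper_half_plane_general
    (R : Type) [Ring R]
    (X : ℤ → ℤ → Type) [∀ p q, AddCommGroup (X p q)] [∀ p q, Module R (X p q)]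
    (d₁ : ∀ p q : ℤ, X p q →ₗ[R] X (p + 1) q)
    (d₂ : ∀ p q : ℤ, X p q →ₗ[R] X p (q + 1))
    (hdd : ∀ (n : ℤ) (x : Tot X n), totD R X d₁ d₂ (n + 1) (totD R X d₁ d₂ n x) = 0)
    -- every row `(X^{•,q}, d₁)` is acyclic (exact at every spot):
    (hexact : ∀ (p q : ℤ) (v : X (p + 1) q), d₁ (p + 1) q v = 0 →
      ∃ w : X p q, d₁ p q w = v)
    -- `X^{p,q} = 0` for `q < 0`:
    (hvanish : ∀ p q : ℤ, q < 0 → Subsingleton (X p q)) :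
    -- the total complex is acyclic:
    ∀ (n : ℤ) (x : Tot X (n + 1)), totD R X d₁ d₂ (n + 1) x = 0 →
      ∃ y : Tot X n, totD R X d₁ d₂ n y = x :=
  fun n _ hx => ⟨staircase d₁ d₂ n _, totD_staircase hdd hexact hvanish hx⟩

/-- Let `X^{p,q}` be a grid of `R`-modules with `R`-linear maps `d₁ : X^{p,q} → X^{p+1,q}`
and `d₂ : X^{p,q} → X^{p,q+1}` such that `d₁ ∘ d₁ = 0` and such that the total map
`d = d₁ + d₂` on the product-totalization squares to zero.  If every row `(X^{•,q}, d₁)` is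
acyclic (exact at every spot) and all nonzero components lie in the upper half-plane
(`X^{p,q} = 0` for `q < 0`), then the total complex is acyclic. -/
theorem almost_double_complex_acyclic_of_rows_acyclic_of_upper_half_plane
    (R : Type) [Ring R]
    (X : ℤ → ℤ → Type) [∀ p q, AddCommGroup (X p q)] [∀ p q, Module R (X p q)]
    (d₁ : ∀ p q : ℤ, X p q →ₗ[R] X (p + 1) q)
    (d₂ : ∀ p q : ℤ, X p q →ₗ[R] X p (q + 1))
    (hd₁ : ∀ p q : ℤ, (d₁ (p + 1) q).comp (d₁ p q) = 0)
    (hdd : ∀ (n : ℤ) (x : Tot X n), totD R X d₁ d₂ (n + 1) (totD R X d₁ d₂ n x) = 0)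
    -- every row `(X^{•,q}, d₁)` is acyclic (exact at every spot):
    (hexact : ∀ (p q : ℤ) (v : X (p + 1) q), d₁ (p + 1) q v = 0 →
      ∃ w : X p q, d₁ p q w = v)
    -- `X^{p,q} = 0` for `q < 0`:
    (hvanish : ∀ p q : ℤ, q < 0 → Subsingleton (X p q)) :
    -- the total complex is acyclic:
    ∀ (n : ℤ) (x : Tot X (n + 1)), totD R X d₁ d₂ (n + 1) x = 0 →
      ∃ y : Tot X n, totD R X d₁ d₂ n y = x :=
  almost_double_complex_acyclic_of_rows_acyclic_of_upper_half_plane_general R X d₁ d₂ hdd hexact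
    hvanish
end
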